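/- arXiv:1007.1311 — 3 statements merged into one kernel-verified Lean document; each statement's English description precedes it below -/
import Mathlib

section
/- If Y is a locally compact, locally connected Hausdorff space and K is a compact subset, then every connected component of the complement of K̂ (the union of K with its relatively compact complementary components) is not relatively compact in Y; equivalently, Y \ K̂ is the union of all unbounded connected components of Y \ K. -/
open Set

/-! `Y \ K̂` is a union of components of `Y \ K`, namely the non relatively compact ones, so its
components are those very components of `Y \ K`. -/

section

variable {X : Type*} [TopologicalSpace X]

theorem connectedComponentIn_eq_of_connectedComponentIn_subset {S T : Set X} {x : X}
    (hTS : T ⊆ S) (hST : connectedComponentIn S x ⊆ T) :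
    connectedComponentIn T x = connectedComponentIn S x := by
  by_cases hx : x ∈ S
  · exact (connectedComponentIn_mono x hTS).antisymm <|
      isPreconnected_connectedComponentIn.subset_connectedComponentIn
        (mem_connectedComponentIn hx) hST
  · rw [connectedComponentIn_eq_empty hx,
      connectedComponentIn_eq_empty fun hxT ↦ hx (hTS hxT)]

theorem connectedComponentIn_sep_connectedComponentIn {S : Set X} (p : Set X → Prop) {x : X}
    (hx : x ∈ {y ∈ S | p (connectedComponentIn S y)}) :
    connectedComponentIn {y ∈ S | p (connectedComponentIn S y)} x = connectedComponentIn S x :=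
  connectedComponentIn_eq_of_connectedComponentIn_subset (sep_subset S _) fun y hy ↦
    ⟨connectedComponentIn_subset S x hy, by rw [← connectedComponentIn_eq hy]; exact hx.2⟩

end

theorem stmt_1_general {Y : Type*} [TopologicalSpace Y] {K : Set Y}
    (Khat : Set Y)
    (hKhat : Khat = K ∪ {y | y ∉ K ∧ IsCompact (closure (connectedComponentIn Kᶜ y))}) :
    (∀ y ∉ Khat, ¬ IsCompact (closure (connectedComponentIn Khatᶜ y))) ∧
    Khatᶜ = {y | y ∉ K ∧ ¬ IsCompact (closure (connectedComponentIn Kᶜ y))} := by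
  have hcompl : Khatᶜ = {y ∈ Kᶜ | ¬ IsCompact (closure (connectedComponentIn Kᶜ y))} := by
    ext y
    simp only [hKhat, mem_compl_iff, mem_union, mem_ofPred_eq]
    tauto
  refine ⟨fun y hy ↦ ?_, hcompl⟩
  rw [← mem_compl_iff, hcompl] at hy
  rw [hcompl, connectedComponentIn_sep_connectedComponentIn (fun s ↦ ¬ IsCompact (closure s)) hy]
  exact hy.2

/-- For `K̂ := K ∪ (union of relatively compact components of Y \ K)`,
every connected component of `Y \ K̂` is not relatively compact; equivalently, `Y \ K̂`
is the union of all unbounded (i.e. non relatively compact) components of `Y \ K`. -/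
theorem stmt_1 {Y : Type*} [TopologicalSpace Y] [T2Space Y] [LocallyCompactSpace Y]
    [LocallyConnectedSpace Y] {K : Set Y} (hK : IsCompact K)
    (Khat : Set Y)
    (hKhat : Khat = K ∪ {y | y ∉ K ∧ IsCompact (closure (connectedComponentIn Kᶜ y))}) :
    (∀ y ∉ Khat, ¬ IsCompact (closure (connectedComponentIn Khatᶜ y))) ∧
    Khatᶜ = {y | y ∉ K ∧ ¬ IsCompact (closure (connectedComponentIn Kᶜ y))} :=
  stmt_1_general Khat hKhat
end

section
/- Let Y be a locally compact, locally connected, non-compact Hausdorff space, L a compact subset, and U the interior of L̂ (where L̂ is L together with the relatively compact components of its complement). Then in the one-point compactification Y∞ = Y ∪ {∞}, the set (Y \ L̂) ∪ {∞} is connected, and hence its closure (Y \ U) ∪ {∞} is connected. -/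
/-!
A point `y ∉ L̂` lies in a component `C` of `Y \ L` whose closure is not compact; then `C ⊆ Y \ L̂`,
and `∞` lies in the closure of `C` in `Y∞`, since the neighbourhoods of `∞` are the complements of
compact sets. So every point of `(Y \ L̂) ∪ {∞}` is joined to `∞` by the preconnected set `C ∪ {∞}`.
The closure of `(Y \ L̂) ∪ {∞}` is `closure (Y \ L̂) ∪ {∞} = (Y \ U) ∪ {∞}`.
-/

open Set

namespace OnePoint

variable {X : Type*} [TopologicalSpace X]

theorem closure_coe_image_union_infty (A : Set X) :
    closure (((↑) : X → OnePoint X) '' A ∪ {∞}) = (↑) '' closure A ∪ {∞} := by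
  rw [closure_union, isClosed_infty.closure_eq,
    isOpenEmbedding_coe.isEmbedding.closure_eq_preimage_closure_image A,
    image_preimage_eq_inter_range,
    inter_union_distrib_right, range_coe_union_infty, inter_univ]

theorem infty_mem_closure_coe_image {C : Set X} (hC : ¬IsCompact (closure C)) :
    ∞ ∈ closure (((↑) : X → OnePoint X) '' C) := by
  rw [mem_closure_iff_nhds_basis hasBasis_nhds_infty]
  rintro K ⟨hK_closed, hK_compact⟩
  obtain ⟨z, hzC, hzK⟩ := not_subset.mp fun hCK : C ⊆ K =>
    hC (hK_compact.of_isClosed_subset isClosed_closure (closure_minimal hCK hK_closed))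
  exact ⟨z, ⟨z, hzC, rfl⟩, Or.inl ⟨z, hzK, rfl⟩⟩

theorem isConnected_coe_image_union_infty {A : Set X}
    (hA : ∀ y ∈ A, ∃ C ⊆ A, y ∈ C ∧ IsPreconnected C ∧ ¬IsCompact (closure C)) :
    IsConnected (((↑) : X → OnePoint X) '' A ∪ {∞}) := by
  refine ⟨⟨∞, Or.inr rfl⟩, isPreconnected_of_forall ∞ ?_⟩
  rintro _ (⟨y, hy, rfl⟩ | rfl)
  · obtain ⟨C, hCA, hyC, hC_pre, hC_noncompact⟩ := hA y hy
    refine ⟨(↑) '' C ∪ {∞}, union_subset_union_left _ (image_mono hCA), Or.inr rfl,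
      Or.inl (mem_image_of_mem _ hyC), ?_⟩
    exact (hC_pre.image _ continuous_coe.continuousOn).subset_closure subset_union_left
      (union_subset subset_closure (singleton_subset_iff.mpr (infty_mem_closure_coe_image
        hC_noncompact)))
  · exact ⟨{∞}, singleton_subset_iff.mpr (Or.inr rfl), rfl, rfl, isPreconnected_singleton⟩

theorem isConnected_coe_image_noncompact_components_union_infty (K : Set X) :
    IsConnected (((↑) : X → OnePoint X) ''
      {y | y ∈ K ∧ ¬IsCompact (closure (connectedComponentIn K y))} ∪ {∞}) := by
  refine isConnected_coe_image_union_infty fun y ⟨hyK, hy⟩ =>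
    ⟨connectedComponentIn K y, fun z hz => ?_, mem_connectedComponentIn hyK,
      isPreconnected_connectedComponentIn, hy⟩
  exact ⟨connectedComponentIn_subset _ _ hz, connectedComponentIn_eq hz ▸ hy⟩

end OnePoint

open OnePoint

theorem stmt_2_general {Y : Type*} [TopologicalSpace Y] {L : Set Y}
    (Lhat U : Set Y)
    (hLhat : Lhat = L ∪ {y | y ∉ L ∧ IsCompact (closure (connectedComponentIn Lᶜ y))})
    (hU : U = interior Lhat) :
    IsConnected ((fun y : Y => (y : OnePoint Y)) '' Lhatᶜ ∪ {(∞ : OnePoint Y)}) ∧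
    closure ((fun y : Y => (y : OnePoint Y)) '' Lhatᶜ ∪ {(∞ : OnePoint Y)}) =
      (fun y : Y => (y : OnePoint Y)) '' Uᶜ ∪ {(∞ : OnePoint Y)} ∧
    IsConnected ((fun y : Y => (y : OnePoint Y)) '' Uᶜ ∪ {(∞ : OnePoint Y)}) := by
  have hLhat_compl :
      Lhatᶜ = {y | y ∈ Lᶜ ∧ ¬IsCompact (closure (connectedComponentIn Lᶜ y))} := by
    ext y
    simp only [hLhat, mem_compl_iff, mem_union, mem_ofPred_eq, not_or, not_and]
    tauto
  have hconn := hLhat_compl ▸ isConnected_coe_image_noncompact_components_union_infty Lᶜ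
  have hclosure : closure ((fun y : Y => (y : OnePoint Y)) '' Lhatᶜ ∪ {∞}) =
      (↑) '' Uᶜ ∪ {∞} := by
    rw [closure_coe_image_union_infty, hU, closure_compl]
  exact ⟨hconn, hclosure, hclosure ▸ hconn.closure⟩

/-- For a locally compact, locally connected, non-compact Hausdorff space `Y`,
a compact `L ⊆ Y`, `L̂` the union of `L` with the relatively compact components of `Y \ L`,
and `U` the interior of `L̂`: in the one-point compactification `Y∞`, the set
`(Y \ L̂) ∪ {∞}` is connected, and hence its closure `(Y \ U) ∪ {∞}` is connected. -/
theorem stmt_2 {Y : Type*} [TopologicalSpace Y] [T2Space Y] [LocallyCompactSpace Y]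
    [LocallyConnectedSpace Y] [NoncompactSpace Y] {L : Set Y} (hL : IsCompact L)
    (Lhat U : Set Y)
    (hLhat : Lhat = L ∪ {y | y ∉ L ∧ IsCompact (closure (connectedComponentIn Lᶜ y))})
    (hU : U = interior Lhat) :
    IsConnected ((fun y : Y => (y : OnePoint Y)) '' Lhatᶜ ∪ {(∞ : OnePoint Y)}) ∧
    closure ((fun y : Y => (y : OnePoint Y)) '' Lhatᶜ ∪ {(∞ : OnePoint Y)}) =
      (fun y : Y => (y : OnePoint Y)) '' Uᶜ ∪ {(∞ : OnePoint Y)} ∧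
    IsConnected ((fun y : Y => (y : OnePoint Y)) '' Uᶜ ∪ {(∞ : OnePoint Y)}) :=
  stmt_2_general Lhat U hLhat hU
end

section
/- Let d = 2 and let Y ⊆ ℝ² be open. If z ∈ ∂Y is such that for every ε > 0 there exists δ ∈ (0, ε) with ∂B(z, δ) ∩ ∂Y = ∅, then the singleton {z} is the connected component of ∂Y containing z. -/
open Metric

theorem IsPreconnected.subset_ball_of_disjoint_sphere {X : Type*} [PseudoMetricSpace X]
    {s : Set X} (hs : IsPreconnected s) {z : X} {δ : ℝ} (hsz : (s ∩ ball z δ).Nonempty)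
    (hsδ : Disjoint s (sphere z δ)) : s ⊆ ball z δ := by
  have hcover : s ⊆ ball z δ ∪ (closedBall z δ)ᶜ := fun x hx => by
    have hxδ : dist x z ≠ δ := fun h => hsδ.notMem_of_mem_left hx h
    rcases hxδ.lt_or_gt with h | h
    · exact Or.inl h
    · exact Or.inr (not_le.mpr h)
  exact hs.subset_left_of_subset_union isOpen_ball isClosed_closedBall.isOpen_compl
    (Set.disjoint_compl_right_iff_subset.mpr ball_subset_closedBall) hcover hsz

theorem connectedComponentIn_eq_singleton_of_forall_sphere_disjoint {X : Type*} [MetricSpace X]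
    {F : Set X} {z : X} (hz : z ∈ F)
    (hsphere : ∀ ε > (0 : ℝ), ∃ δ, 0 < δ ∧ δ < ε ∧ Disjoint (sphere z δ) F) :
    connectedComponentIn F z = {z} := by
  refine Set.eq_singleton_iff_unique_mem.mpr ⟨mem_connectedComponentIn hz, fun w hw => ?_⟩
  refine dist_le_zero.mp (le_of_forall_pos_le_add fun ε hε => ?_)
  obtain ⟨δ, hδ, hδε, hdisj⟩ := hsphere ε hε
  have hball : connectedComponentIn F z ⊆ ball z δ :=
    isPreconnected_connectedComponentIn.subset_ball_of_disjoint_sphere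
      ⟨z, mem_connectedComponentIn hz, mem_ball_self hδ⟩
      (hdisj.symm.mono_left (connectedComponentIn_subset F z))
  linarith [mem_ball.mp (hball hw)]

theorem stmt_9_general {Y : Set (EuclideanSpace ℝ (Fin 2))}
    {z : EuclideanSpace ℝ (Fin 2)} (hz : z ∈ frontier Y)
    (hcirc : ∀ ε > (0 : ℝ), ∃ δ, 0 < δ ∧ δ < ε ∧ sphere z δ ∩ frontier Y = ∅) :
    connectedComponentIn (frontier Y) z = {z} :=
  connectedComponentIn_eq_singleton_of_forall_sphere_disjoint hz fun ε hε =>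
    (hcirc ε hε).imp fun _ ⟨hδ, hδε, hempty⟩ => ⟨hδ, hδε, Set.disjoint_iff_inter_eq_empty.mpr hempty⟩

/-- For an open `Y ⊆ ℝ²` and `z ∈ ∂Y` such that arbitrarily small circles
around `z` miss `∂Y`, the singleton `{z}` is the connected component of `z` in `∂Y`. -/
theorem stmt_9 {Y : Set (EuclideanSpace ℝ (Fin 2))} (hY : IsOpen Y)
    {z : EuclideanSpace ℝ (Fin 2)} (hz : z ∈ frontier Y)
    (hcirc : ∀ ε > (0 : ℝ), ∃ δ, 0 < δ ∧ δ < ε ∧ sphere z δ ∩ frontier Y = ∅) :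
    connectedComponentIn (frontier Y) z = {z} :=
  stmt_9_general hz hcirc
end
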